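/- arXiv:1911.01011 — 2 statements merged into one kernel-verified Lean document; each statement's English description precedes it below -/
import Mathlib

section
/- For every i∈I, the linear maps r_i and ᵢr on '𝔣 map the radical 𝔍 of the bilinear form (−,−) into itself; in particular they descend to linear maps on 𝔣_β = '𝔣/𝔍. -/
open scoped TensorProduct

noncomputable section

/-- A Cartan datum on `I`. -/
structure CartanDatum (I : Type) where
  c : I → I → ℤ
  symm : ∀ i j, c i j = c j i
  pos : ∀ i, 0 < c i i
  even : ∀ i, Even (c i i)
  dvd : ∀ i j, i ≠ j → c i i ∣ 2 * c i j
  nonpos : ∀ i j, i ≠ j → 2 * c i j ≤ 0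

namespace CartanDatum

variable {I : Type} (cd : CartanDatum I)

/-- `d i = (i·i)/2`. -/
def d (i : I) : ℤ := cd.c i i / 2

/-- `a i j = 2(i·j)/(i·i)`. -/
def a (i j : I) : ℤ := 2 * cd.c i j / cd.c i i

/-- Extension of the pairing to `ℕ[I] × ℕ[I]`. -/
def dotN (ν μ : I →₀ ℕ) : ℤ :=
  ν.sum fun i m => μ.sum fun j n => (m : ℤ) * (n : ℤ) * cd.c i j

end CartanDatum

/-- A multiplicative bilinear form `ℕ[I] × ℕ[I] → 𝔽`. -/
structure MultForm (I 𝔽 : Type) [Field 𝔽] where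
  f : (I →₀ ℕ) → (I →₀ ℕ) → 𝔽
  add_left : ∀ ν ν' μ, f (ν + ν') μ = f ν μ * f ν' μ
  add_right : ∀ μ ν ν', f μ (ν + ν') = f μ ν * f μ ν'
  ne_zero : ∀ ν μ, f ν μ ≠ 0

/-- The trivial multiplicative bilinear form, constantly `1`. -/
def trivMF (I 𝔽 : Type) [Field 𝔽] : MultForm I 𝔽 :=
  ⟨fun _ _ => 1, fun _ _ _ => by ring, fun _ _ _ => by ring, fun _ _ => one_ne_zero⟩

variable {I : Type}

/-- The generator `i` of `ℕ[I]`. -/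
def δN (i : I) : I →₀ ℕ := Finsupp.single i 1

/-- The model for the free algebra `'𝔣` on the `θ i`. -/
abbrev FA (𝔽 I : Type) [Field 𝔽] := MonoidAlgebra 𝔽 (FreeMonoid I)

/-- The generator `θ i` of `'𝔣`. -/
def θ (𝔽 : Type) [Field 𝔽] {I : Type} (i : I) : FA 𝔽 I :=
  MonoidAlgebra.of 𝔽 (FreeMonoid I) (FreeMonoid.of i)

/-- The `ℕ[I]`-degree of a word. -/
def wt [DecidableEq I] (w : FreeMonoid I) : I →₀ ℕ :=
  Multiset.toFinsupp (↑(FreeMonoid.toList w))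

/-- Homogeneity of degree `ν` in `'𝔣`. -/
def IsHomog {𝔽 : Type} [Field 𝔽] [DecidableEq I] (ν : I →₀ ℕ) (x : FA 𝔽 I) : Prop :=
  ∀ w ∈ Finsupp.support (x.coeff : FreeMonoid I →₀ 𝔽), wt w = ν

/-- The model for `'𝔣 ⊗ '𝔣` (basis: pairs of words). -/
abbrev TA (𝔽 I : Type) [Field 𝔽] := MonoidAlgebra 𝔽 (FreeMonoid I × FreeMonoid I)

/-- The tensor `x ⊗ y` in the model of `'𝔣 ⊗ '𝔣`. -/
def tmul {𝔽 : Type} [Field 𝔽] (x y : FA 𝔽 I) : TA 𝔽 I :=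
  Finsupp.sum (x.coeff : FreeMonoid I →₀ 𝔽) fun w a =>
    Finsupp.sum (y.coeff : FreeMonoid I →₀ 𝔽) fun u b =>
      MonoidAlgebra.ofCoeff (Finsupp.single (w, u) (a * b) : (FreeMonoid I × FreeMonoid I) →₀ 𝔽)

/-- The twisted multiplication on `'𝔣 ⊗ '𝔣`:
`(x₁⊗x₂)(y₁⊗y₂) = v^{-|y₁|·|x₂|} β(|x₂|,|y₁|) x₁y₁ ⊗ x₂y₂`. -/
def tMul [DecidableEq I] {𝔽 : Type} [Field 𝔽] (cd : CartanDatum I) (v : 𝔽)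
    (β : MultForm I 𝔽) (z z' : TA 𝔽 I) : TA 𝔽 I :=
  Finsupp.sum (z.coeff : (FreeMonoid I × FreeMonoid I) →₀ 𝔽) fun p a =>
    Finsupp.sum (z'.coeff : (FreeMonoid I × FreeMonoid I) →₀ 𝔽) fun q b =>
      MonoidAlgebra.ofCoeff (Finsupp.single (p.1 * q.1, p.2 * q.2)
        (a * b * v ^ (-(cd.dotN (wt q.1) (wt p.2))) * β.f (wt p.2) (wt q.1))
        : (FreeMonoid I × FreeMonoid I) →₀ 𝔽)

/-- The bilinear form on `'𝔣 ⊗ '𝔣` induced by a form `B` on `'𝔣`: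
`(x₁⊗x₂, y₁⊗y₂) = α(|x₁|,|x₂|) (x₁,y₁) (x₂,y₂)` for homogeneous `x₁, x₂`. -/
def pairT [DecidableEq I] {𝔽 : Type} [Field 𝔽] (α : MultForm I 𝔽)
    (B : FA 𝔽 I →ₗ[𝔽] FA 𝔽 I →ₗ[𝔽] 𝔽) (z z' : TA 𝔽 I) : 𝔽 :=
  Finsupp.sum (z.coeff : (FreeMonoid I × FreeMonoid I) →₀ 𝔽) fun p a =>
    Finsupp.sum (z'.coeff : (FreeMonoid I × FreeMonoid I) →₀ 𝔽) fun q b =>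
      a * b * α.f (wt p.1) (wt p.2)
        * B (MonoidAlgebra.single p.1 1) (MonoidAlgebra.single q.1 1)
        * B (MonoidAlgebra.single p.2 1) (MonoidAlgebra.single q.2 1)

/-- The quantum integer `[n]_c`. -/
def qnum {𝔽 : Type} [Field 𝔽] (c : 𝔽) (n : ℕ) : 𝔽 :=
  (c ^ (n : ℤ) - c ^ (-(n : ℤ))) / (c - c⁻¹)

/-- The quantum factorial `[n]_c!`. -/
def qfact {𝔽 : Type} [Field 𝔽] (c : 𝔽) (n : ℕ) : 𝔽 :=
  ∏ k ∈ Finset.range n, qnum c (k + 1)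

/-- The divided power `θ_i^{(n)} = θ_i^n / [n]_{v_i}!`. -/
def θdiv [DecidableEq I] {𝔽 : Type} [Field 𝔽] (cd : CartanDatum I) (v : 𝔽)
    (i : I) (n : ℕ) : FA 𝔽 I :=
  (qfact (v ^ cd.d i) n)⁻¹ • (θ 𝔽 i) ^ n

/-- The twisted quantum Serre element
`D_{ij} = Σ_{k+k'=1-a_{ij}} (-1)^k β(i,j)^{-k} θ_i^{(k)} θ_j θ_i^{(k')}`. -/
def Dij [DecidableEq I] {𝔽 : Type} [Field 𝔽] (cd : CartanDatum I) (v : 𝔽)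
    (g : I → I → 𝔽) (i j : I) : FA 𝔽 I :=
  ∑ k ∈ Finset.range ((1 - cd.a i j).toNat + 1),
    ((-1 : 𝔽) ^ k * ((g i j)⁻¹) ^ k) •
      (θdiv cd v i k * θ 𝔽 j * θdiv cd v i ((1 - cd.a i j).toNat - k))

end

/-!
Expand `r(x)` in the basis of pairs of words. Induction on words, using
`r(θ_j y) = (θ_j ⊗ 1) r(y) + (1 ⊗ θ_j) r(y)`, shows that the part of `r(x)` of the form `_ ⊗ θ_i`
is `r_i(x) ⊗ θ_i` and the part of the form `θ_i ⊗ _` is `θ_i ⊗ ᵢr(x)`. The form pairs words only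
of equal degree, so for every word `y`
`(x, y θ_i) = α(|y|, i) (θ_i, θ_i) (r_i x, y)` and `(x, θ_i y) = α(i, |y|) (θ_i, θ_i) (ᵢr x, y)`.
As `(θ_i, θ_i) = (1 - v_i^{-2})⁻¹ ≠ 0` for transcendental `v`, an `x` in the radical makes
`r_i x` and `ᵢr x` orthogonal to every word.
-/

open MonoidAlgebra

namespace FreeMonoid

variable {I : Type}

theorem of_mul_eq_of_iff {i j : I} {u : FreeMonoid I} : of j * u = of i ↔ j = i ∧ u = 1 := by
  simp [← toList.injective.eq_iff]

end FreeMonoid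

section Weight

variable {I : Type} [DecidableEq I]

instance : DecidableEq (FreeMonoid I) := inferInstanceAs (DecidableEq (List I))

@[simp] theorem wt_one : wt (1 : FreeMonoid I) = 0 := by
  simp [wt]

@[simp] theorem wt_of (i : I) : wt (FreeMonoid.of i) = δN i := by
  simp [wt, δN]

@[simp] theorem wt_mul (w u : FreeMonoid I) : wt (w * u) = wt w + wt u := by
  simp [wt, ← Multiset.coe_add]

theorem eq_of_wt_eq_δN {w : FreeMonoid I} {i : I} (h : wt w = δN i) : w = FreeMonoid.of i := by
  have : (FreeMonoid.toList w : Multiset I) = {i} :=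
    Multiset.toFinsupp.injective (by simpa [wt, δN] using h)
  exact FreeMonoid.toList.injective (by simpa using this)

end Weight

namespace CartanDatum

variable {I : Type} (cd : CartanDatum I)

@[simp] theorem dotN_zero_left (μ : I →₀ ℕ) : cd.dotN 0 μ = 0 := by
  simp [dotN]

@[simp] theorem dotN_zero_right (ν : I →₀ ℕ) : cd.dotN ν 0 = 0 := by
  simp [dotN]

theorem dotN_comm (ν μ : I →₀ ℕ) : cd.dotN ν μ = cd.dotN μ ν := by
  unfold dotN
  rw [Finsupp.sum_comm]
  refine Finsupp.sum_congr fun j _ => Finsupp.sum_congr fun i _ => ?_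
  rw [cd.symm]
  ring

end CartanDatum

namespace MultForm

variable {I 𝔽 : Type} [Field 𝔽] (f : MultForm I 𝔽)

@[simp] theorem f_zero_left (μ : I →₀ ℕ) : f.f 0 μ = 1 := by
  have h := f.add_left 0 0 μ
  rw [add_zero, eq_comm, mul_eq_left₀ (f.ne_zero 0 μ)] at h
  exact h

@[simp] theorem f_zero_right (ν : I →₀ ℕ) : f.f ν 0 = 1 := by
  have h := f.add_right ν 0 0
  rw [add_zero, eq_comm, mul_eq_left₀ (f.ne_zero ν 0)] at h
  exact h

end MultForm

theorem Transcendental.one_sub_zpow_neg_ne_zero {R K : Type*} [CommRing R] [Nontrivial R]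
    [Field K] [Algebra R K] {x : K} (hx : Transcendental R x) {n : ℤ} (hn : 0 < n) :
    1 - x ^ (-n) ≠ 0 := by
  lift n to ℕ using hn.le
  rw [sub_ne_zero, zpow_neg, zpow_natCast, ne_comm, inv_ne_one]
  exact fun h => hx.pow (by exact_mod_cast hn) (h ▸ isAlgebraic_one)

/-- The scalar of the product in `'𝔣 ⊗ '𝔣`: `(x₁ ⊗ x₂)(y₁ ⊗ y₂)` carries `twist |y₁| |x₂|`. -/
def twist {I 𝔽 : Type} [Field 𝔽] (cd : CartanDatum I) (v : 𝔽) (β : MultForm I 𝔽)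
    (ν μ : I →₀ ℕ) : 𝔽 :=
  v ^ (-(cd.dotN ν μ)) * β.f μ ν

section Tensor

variable {I : Type} {𝔽 : Type} [Field 𝔽]

theorem tmul_single_one (w u : FreeMonoid I) :
    tmul (single w 1 : FA 𝔽 I) (single u 1) = single (w, u) 1 := by
  unfold tmul
  rw [MonoidAlgebra.coeff_single, MonoidAlgebra.coeff_single, Finsupp.sum_single_index,
    Finsupp.sum_single_index, mul_one, MonoidAlgebra.ofCoeff_single] <;> simp

theorem θ_eq_single (j : I) : θ 𝔽 j = single (FreeMonoid.of j) 1 := rfl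

theorem θ_mul_single (j : I) (w : FreeMonoid I) (a : 𝔽) :
    θ 𝔽 j * single w a = single (FreeMonoid.of j * w) a := by
  rw [θ_eq_single, single_mul_single, one_mul]

variable {cd : CartanDatum I} {v : 𝔽} {β : MultForm I 𝔽}

@[simp] theorem twist_zero_left (μ : I →₀ ℕ) : twist cd v β 0 μ = 1 := by
  simp [twist]

@[simp] theorem twist_zero_right (ν : I →₀ ℕ) : twist cd v β ν 0 = 1 := by
  simp [twist]

variable [DecidableEq I]

theorem tMul_add_left (W W' Z : TA 𝔽 I) :
    tMul cd v β (W + W') Z = tMul cd v β W Z + tMul cd v β W' Z := by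
  unfold tMul
  rw [MonoidAlgebra.coeff_add]
  refine Finsupp.sum_add_index' (fun p => by simp) fun p a a' => ?_
  rw [← Finsupp.sum_add]
  refine Finsupp.sum_congr fun q _ => ?_
  rw [← MonoidAlgebra.ofCoeff_add, ← Finsupp.single_add]
  ring_nf

theorem tMul_single_one_left (p : FreeMonoid I × FreeMonoid I) (Z : TA 𝔽 I) :
    tMul cd v β (single p 1) Z = Z.coeff.sum fun q b =>
      single (p.1 * q.1, p.2 * q.2) (twist cd v β (wt q.1) (wt p.2) * b) := by
  unfold tMul
  rw [MonoidAlgebra.coeff_single, Finsupp.sum_single_index]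
  · exact Finsupp.sum_congr fun q _ => by rw [MonoidAlgebra.ofCoeff_single, twist]; ring_nf
  · simp

theorem tMul_θ_one_left (j : I) (Z : TA 𝔽 I) :
    tMul cd v β (single (FreeMonoid.of j, 1) 1) Z =
      Z.coeff.sum fun q b => single (FreeMonoid.of j * q.1, q.2) b := by
  simp [tMul_single_one_left]

theorem tMul_one_θ_left (j : I) (Z : TA 𝔽 I) :
    tMul cd v β (single (1, FreeMonoid.of j) 1) Z =
      Z.coeff.sum fun q b =>
        single (q.1, FreeMonoid.of j * q.2) (twist cd v β (wt q.1) (δN j) * b) := by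
  simp [tMul_single_one_left, wt_of]

variable (α : MultForm I 𝔽) (B : FA 𝔽 I →ₗ[𝔽] FA 𝔽 I →ₗ[𝔽] 𝔽)

theorem pairT_add_left (W W' Z : TA 𝔽 I) :
    pairT α B (W + W') Z = pairT α B W Z + pairT α B W' Z := by
  unfold pairT
  rw [MonoidAlgebra.coeff_add]
  refine Finsupp.sum_add_index' (fun p => by simp) fun p a a' => ?_
  rw [← Finsupp.sum_add]
  exact Finsupp.sum_congr fun q _ => by ring

theorem pairT_add_right (Z W W' : TA 𝔽 I) :
    pairT α B Z (W + W') = pairT α B Z W + pairT α B Z W' := by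
  unfold pairT
  rw [← Finsupp.sum_add]
  refine Finsupp.sum_congr fun p _ => ?_
  rw [MonoidAlgebra.coeff_add]
  exact Finsupp.sum_add_index' (fun q => by simp) fun q b b' => by ring

theorem pairT_single_one_right (Z : TA 𝔽 I) (q : FreeMonoid I × FreeMonoid I) :
    pairT α B Z (single q 1) = Z.coeff.sum fun p a =>
      a * α.f (wt p.1) (wt p.2) * B (single p.1 1) (single q.1 1) *
        B (single p.2 1) (single q.2 1) := by
  simp [pairT, MonoidAlgebra.coeff_single]

theorem pairT_single_one (p q : FreeMonoid I × FreeMonoid I) :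
    pairT α B (single p 1) (single q 1) =
      α.f (wt p.1) (wt p.2) * B (single p.1 1) (single q.1 1) *
        B (single p.2 1) (single q.2 1) := by
  simp [pairT_single_one_right, MonoidAlgebra.coeff_single]

end Tensor

section Homogeneity

variable {I : Type} [DecidableEq I] {𝔽 : Type} [Field 𝔽]
  {cd : CartanDatum I} {v : 𝔽} {β : MultForm I 𝔽}

theorem isHomog_single_one (w : FreeMonoid I) : IsHomog (wt w) (single w 1 : FA 𝔽 I) := by
  intro u hu
  rw [Finset.mem_singleton.mp (Finsupp.support_single_subset hu)]

theorem isHomog_θ (j : I) : IsHomog (δN j) (θ 𝔽 j) :=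
  wt_of j ▸ isHomog_single_one (FreeMonoid.of j)

def IsHomogT (ν : I →₀ ℕ) (Z : TA 𝔽 I) : Prop :=
  ∀ p ∈ Z.coeff.support, wt p.1 + wt p.2 = ν

theorem IsHomogT.add {ν : I →₀ ℕ} {Z W : TA 𝔽 I} (hZ : IsHomogT ν Z)
    (hW : IsHomogT ν W) : IsHomogT ν (Z + W) := fun p hp => by
  rw [MonoidAlgebra.coeff_add] at hp
  exact (Finset.mem_union.mp (Finsupp.support_add hp)).elim (hZ p) (hW p)

theorem isHomogT_sum_single {ν : I →₀ ℕ} (Z : TA 𝔽 I)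
    (f : FreeMonoid I × FreeMonoid I → FreeMonoid I × FreeMonoid I)
    (g : FreeMonoid I × FreeMonoid I → 𝔽 → 𝔽)
    (hf : ∀ q ∈ Z.coeff.support, wt (f q).1 + wt (f q).2 = ν) :
    IsHomogT ν (Z.coeff.sum fun q b => single (f q) (g q b)) := fun p hp => by
  rw [MonoidAlgebra.coeff_finsuppSum] at hp
  obtain ⟨q, hq, hpq⟩ := Finset.mem_biUnion.mp (Finsupp.support_sum hp)
  rw [Finset.mem_singleton.mp (Finsupp.support_single_subset hpq)]
  exact hf q hq

theorem isHomogT_tMul_θ_one {ν : I →₀ ℕ} {Z : TA 𝔽 I} (hZ : IsHomogT ν Z) (j : I) :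
    IsHomogT (δN j + ν) (tMul cd v β (single (FreeMonoid.of j, 1) 1) Z) := by
  rw [tMul_θ_one_left]
  exact isHomogT_sum_single _ _ _ fun q hq => by simp [← hZ q hq, add_assoc]

theorem isHomogT_tMul_one_θ {ν : I →₀ ℕ} {Z : TA 𝔽 I} (hZ : IsHomogT ν Z) (j : I) :
    IsHomogT (δN j + ν) (tMul cd v β (single (1, FreeMonoid.of j) 1) Z) := by
  rw [tMul_one_θ_left]
  exact isHomogT_sum_single _ _ _ fun q hq => by simp [← hZ q hq, add_left_comm]

end Homogeneity

section Slice

variable {I : Type} [DecidableEq I] {𝔽 : Type} [Field 𝔽]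
  {cd : CartanDatum I} {v : 𝔽} {β : MultForm I 𝔽}

/-- The part of `Z` of the form `_ ⊗ u`, read in the first tensor factor. -/
noncomputable def sliceSnd (u : FreeMonoid I) : TA 𝔽 I →ₗ[𝔽] FA 𝔽 I :=
  Finsupp.linearCombination 𝔽 (fun p : FreeMonoid I × FreeMonoid I =>
    if p.2 = u then single p.1 (1 : 𝔽) else 0) ∘ₗ (coeffLinearEquiv 𝔽).toLinearMap

/-- The part of `Z` of the form `u ⊗ _`, read in the second tensor factor. -/
noncomputable def sliceFst (u : FreeMonoid I) : TA 𝔽 I →ₗ[𝔽] FA 𝔽 I :=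
  Finsupp.linearCombination 𝔽 (fun p : FreeMonoid I × FreeMonoid I =>
    if p.1 = u then single p.2 (1 : 𝔽) else 0) ∘ₗ (coeffLinearEquiv 𝔽).toLinearMap

theorem sliceSnd_single (u : FreeMonoid I) (p : FreeMonoid I × FreeMonoid I) (a : 𝔽) :
    sliceSnd u (single p a) = if p.2 = u then single p.1 a else 0 := by
  simp [sliceSnd, MonoidAlgebra.coeff_single]

theorem sliceFst_single (u : FreeMonoid I) (p : FreeMonoid I × FreeMonoid I) (a : 𝔽) :
    sliceFst u (single p a) = if p.1 = u then single p.2 a else 0 := by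
  simp [sliceFst, MonoidAlgebra.coeff_single]

theorem sliceSnd_apply (u : FreeMonoid I) (Z : TA 𝔽 I) :
    sliceSnd u Z = Z.coeff.sum fun q b => if q.2 = u then single q.1 b else 0 := by
  conv_lhs => rw [← MonoidAlgebra.sum_coeff_single Z]
  simp only [map_finsuppSum, sliceSnd_single]

theorem sliceFst_apply (u : FreeMonoid I) (Z : TA 𝔽 I) :
    sliceFst u Z = Z.coeff.sum fun q b => if q.1 = u then single q.2 b else 0 := by
  conv_lhs => rw [← MonoidAlgebra.sum_coeff_single Z]
  simp only [map_finsuppSum, sliceFst_single]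

theorem sliceSnd_tMul_θ_one (u : FreeMonoid I) (j : I) (Z : TA 𝔽 I) :
    sliceSnd u (tMul cd v β (single (FreeMonoid.of j, 1) 1) Z) = θ 𝔽 j * sliceSnd u Z := by
  rw [tMul_θ_one_left, map_finsuppSum, sliceSnd_apply, Finsupp.mul_sum]
  refine Finsupp.sum_congr fun q _ => ?_
  rw [sliceSnd_single]
  split_ifs <;> simp [θ_mul_single]

theorem sliceSnd_one_tMul_one_θ (j : I) (Z : TA 𝔽 I) :
    sliceSnd 1 (tMul cd v β (single (1, FreeMonoid.of j) 1) Z) = 0 := by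
  rw [tMul_one_θ_left, map_finsuppSum]
  exact Finset.sum_eq_zero fun q _ => by simp [sliceSnd_single]

theorem sliceSnd_of_tMul_one_θ {ν : I →₀ ℕ} {Z : TA 𝔽 I} (hZ : IsHomogT ν Z) (i j : I) :
    sliceSnd (FreeMonoid.of i) (tMul cd v β (single (1, FreeMonoid.of j) 1) Z) =
      if j = i then twist cd v β ν (δN j) • sliceSnd 1 Z else 0 := by
  rw [tMul_one_θ_left, map_finsuppSum]
  split_ifs with hji
  · subst hji
    rw [sliceSnd_apply, Finsupp.smul_sum]
    refine Finsupp.sum_congr fun q hq => ?_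
    rw [sliceSnd_single]
    by_cases hq2 : q.2 = 1
    · have hwq : wt q.1 = ν := by simpa [hq2] using hZ q hq
      simp [hq2, hwq]
    · simp [hq2]
  · exact Finset.sum_eq_zero fun q _ => by
      simp [sliceSnd_single, FreeMonoid.of_mul_eq_of_iff, hji]

theorem sliceFst_tMul_one_θ (u : FreeMonoid I) (j : I) (Z : TA 𝔽 I) :
    sliceFst u (tMul cd v β (single (1, FreeMonoid.of j) 1) Z) =
      twist cd v β (wt u) (δN j) • (θ 𝔽 j * sliceFst u Z) := by
  rw [tMul_one_θ_left, map_finsuppSum, sliceFst_apply, Finsupp.mul_sum, Finsupp.smul_sum]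
  refine Finsupp.sum_congr fun q _ => ?_
  rw [sliceFst_single]
  split_ifs with h
  · subst h
    simp [θ_mul_single]
  · simp

theorem sliceFst_one_tMul_θ_one (j : I) (Z : TA 𝔽 I) :
    sliceFst 1 (tMul cd v β (single (FreeMonoid.of j, 1) 1) Z) = 0 := by
  rw [tMul_θ_one_left, map_finsuppSum]
  exact Finset.sum_eq_zero fun q _ => by simp [sliceFst_single]

theorem sliceFst_of_tMul_θ_one (i j : I) (Z : TA 𝔽 I) :
    sliceFst (FreeMonoid.of i) (tMul cd v β (single (FreeMonoid.of j, 1) 1) Z) =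
      if j = i then sliceFst 1 Z else 0 := by
  rw [tMul_θ_one_left, map_finsuppSum]
  split_ifs with hji
  · subst hji
    rw [sliceFst_apply]
    exact Finsupp.sum_congr fun q _ => by simp [sliceFst_single]
  · exact Finset.sum_eq_zero fun q _ => by
      simp [sliceFst_single, FreeMonoid.of_mul_eq_of_iff, hji]

end Slice

section Coproduct

variable {I : Type} [DecidableEq I] {𝔽 : Type} [Field 𝔽]

structure IsTwistedCoproduct (cd : CartanDatum I) (v : 𝔽) (β : MultForm I 𝔽)
    (r : FA 𝔽 I →ₗ[𝔽] TA 𝔽 I) : Prop where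
  map_one : r 1 = tmul 1 1
  map_θ : ∀ i, r (θ 𝔽 i) = tmul (θ 𝔽 i) 1 + tmul 1 (θ 𝔽 i)
  map_mul : ∀ x y, r (x * y) = tMul cd v β (r x) (r y)

namespace IsTwistedCoproduct

variable {cd : CartanDatum I} {v : 𝔽} {β : MultForm I 𝔽}
  {r : FA 𝔽 I →ₗ[𝔽] TA 𝔽 I}

theorem map_one_eq_single (hr : IsTwistedCoproduct cd v β r) : r 1 = single (1, 1) 1 := by
  rw [hr.map_one, MonoidAlgebra.one_def, tmul_single_one]

theorem map_θ_mul (hr : IsTwistedCoproduct cd v β r) (j : I) (y : FA 𝔽 I) :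
    r (θ 𝔽 j * y) = tMul cd v β (single (FreeMonoid.of j, 1) 1) (r y) +
      tMul cd v β (single (1, FreeMonoid.of j) 1) (r y) := by
  rw [hr.map_mul, hr.map_θ, θ_eq_single, MonoidAlgebra.one_def, tmul_single_one,
    tmul_single_one, tMul_add_left]

theorem isHomogT_map_single_one (hr : IsTwistedCoproduct cd v β r) (w : FreeMonoid I) :
    IsHomogT (wt w) (r (single w 1)) := by
  induction w using FreeMonoid.recOn with
  | one =>
    rw [← MonoidAlgebra.one_def, hr.map_one_eq_single]
    intro p hp
    rw [Finset.mem_singleton.mp (Finsupp.support_single_subset hp)]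
    simp
  | of_mul j w ih =>
    rw [← θ_mul_single, hr.map_θ_mul, wt_mul, wt_of]
    exact (isHomogT_tMul_θ_one ih j).add (isHomogT_tMul_one_θ ih j)

theorem sliceSnd_one_map_single_one (hr : IsTwistedCoproduct cd v β r) (w : FreeMonoid I) :
    sliceSnd 1 (r (single w 1)) = single w 1 := by
  induction w using FreeMonoid.recOn with
  | one => simp [← MonoidAlgebra.one_def, hr.map_one_eq_single, sliceSnd_single]
  | of_mul j w ih =>
    rw [← θ_mul_single, hr.map_θ_mul, map_add, sliceSnd_tMul_θ_one, sliceSnd_one_tMul_one_θ,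
      ih, add_zero]

theorem sliceFst_one_map_single_one (hr : IsTwistedCoproduct cd v β r) (w : FreeMonoid I) :
    sliceFst 1 (r (single w 1)) = single w 1 := by
  induction w using FreeMonoid.recOn with
  | one => simp [← MonoidAlgebra.one_def, hr.map_one_eq_single, sliceFst_single]
  | of_mul j w ih =>
    rw [← θ_mul_single, hr.map_θ_mul, map_add, sliceFst_one_tMul_θ_one, sliceFst_tMul_one_θ,
      ih, wt_one, twist_zero_left, one_smul, zero_add]

theorem sliceSnd_of_comp_eq (hr : IsTwistedCoproduct cd v β r) {i : I}
    {ri : FA 𝔽 I →ₗ[𝔽] FA 𝔽 I}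
    (hri1 : ri 1 = 0) (hriθ : ∀ j : I, ri (θ 𝔽 j) = if i = j then 1 else 0)
    (hrim : ∀ (ν μ : I →₀ ℕ) (x y : FA 𝔽 I), IsHomog ν x → IsHomog μ y →
      ri (x * y) = (v ^ (-(cd.dotN (δN i) μ)) * β.f (δN i) μ) • (ri x * y) + x * ri y) :
    sliceSnd (FreeMonoid.of i) ∘ₗ r = ri := by
  ext w : 2
  simp only [LinearMap.comp_apply, MonoidAlgebra.lsingle_apply]
  induction w using FreeMonoid.recOn with
  | one => simp [← MonoidAlgebra.one_def, hr.map_one_eq_single, sliceSnd_single, hri1]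
  | of_mul j w ih =>
    rw [← θ_mul_single, hr.map_θ_mul, map_add, sliceSnd_tMul_θ_one, ih,
      sliceSnd_of_tMul_one_θ (hr.isHomogT_map_single_one w), hr.sliceSnd_one_map_single_one,
      hrim _ _ _ _ (isHomog_θ j) (isHomog_single_one w), hriθ]
    obtain rfl | hji := eq_or_ne j i
    · rw [if_pos rfl, if_pos rfl, twist, cd.dotN_comm, one_mul, add_comm]
    · simp [hji, hji.symm]

theorem sliceFst_of_comp_eq (hr : IsTwistedCoproduct cd v β r) {i : I}
    {ir : FA 𝔽 I →ₗ[𝔽] FA 𝔽 I}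
    (hir1 : ir 1 = 0) (hirθ : ∀ j : I, ir (θ 𝔽 j) = if i = j then 1 else 0)
    (hirm : ∀ (ν μ : I →₀ ℕ) (x y : FA 𝔽 I), IsHomog ν x → IsHomog μ y →
      ir (x * y) = ir x * y + (v ^ (-(cd.dotN (δN i) ν)) * β.f ν (δN i)) • (x * ir y)) :
    sliceFst (FreeMonoid.of i) ∘ₗ r = ir := by
  ext w : 2
  simp only [LinearMap.comp_apply, MonoidAlgebra.lsingle_apply]
  induction w using FreeMonoid.recOn with
  | one => simp [← MonoidAlgebra.one_def, hr.map_one_eq_single, sliceFst_single, hir1]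
  | of_mul j w ih =>
    rw [← θ_mul_single, hr.map_θ_mul, map_add, sliceFst_of_tMul_θ_one, sliceFst_tMul_one_θ,
      ih, hr.sliceFst_one_map_single_one, hirm _ _ _ _ (isHomog_θ j) (isHomog_single_one w), hirθ,
      wt_of, twist, cd.dotN_comm]
    obtain rfl | hji := eq_or_ne j i
    · rw [if_pos rfl, if_pos rfl, one_mul]
    · simp [hji, hji.symm]

end IsTwistedCoproduct

end Coproduct

section Form

variable {I : Type} [DecidableEq I] {𝔽 : Type} [Field 𝔽]

structure IsLusztigForm (α : MultForm I 𝔽) (r : FA 𝔽 I →ₗ[𝔽] TA 𝔽 I)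
    (B : FA 𝔽 I →ₗ[𝔽] FA 𝔽 I →ₗ[𝔽] 𝔽) : Prop where
  symm : ∀ x y, B x y = B y x
  one_one : B 1 1 = 1
  θ_θ_of_ne : ∀ i j : I, i ≠ j → B (θ 𝔽 i) (θ 𝔽 j) = 0
  mul_right : ∀ x y' y'', B x (y' * y'') = pairT α B (r x) (tmul y' y'')
  mul_left : ∀ x' x'' y, B (x' * x'') y = pairT α B (tmul x' x'') (r y)

theorem apply_sliceSnd (B : FA 𝔽 I →ₗ[𝔽] FA 𝔽 I →ₗ[𝔽] 𝔽) (u : FreeMonoid I)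
    (Z : TA 𝔽 I) (y : FA 𝔽 I) :
    B (sliceSnd u Z) y = Z.coeff.sum fun p a => if p.2 = u then a * B (single p.1 1) y else 0 := by
  rw [sliceSnd_apply, map_finsuppSum, LinearMap.finsupp_sum_apply]
  refine Finsupp.sum_congr fun p _ => ?_
  split_ifs
  · rw [← MonoidAlgebra.smul_of, map_smul, LinearMap.smul_apply, smul_eq_mul,
      MonoidAlgebra.of_apply]
  · simp

theorem apply_sliceFst (B : FA 𝔽 I →ₗ[𝔽] FA 𝔽 I →ₗ[𝔽] 𝔽) (u : FreeMonoid I)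
    (Z : TA 𝔽 I) (y : FA 𝔽 I) :
    B (sliceFst u Z) y = Z.coeff.sum fun p a => if p.1 = u then a * B (single p.2 1) y else 0 := by
  rw [sliceFst_apply, map_finsuppSum, LinearMap.finsupp_sum_apply]
  refine Finsupp.sum_congr fun p _ => ?_
  split_ifs
  · rw [← MonoidAlgebra.smul_of, map_smul, LinearMap.smul_apply, smul_eq_mul,
      MonoidAlgebra.of_apply]
  · simp

namespace IsLusztigForm

variable {cd : CartanDatum I} {v : 𝔽} {α β : MultForm I 𝔽}
  {r : FA 𝔽 I →ₗ[𝔽] TA 𝔽 I}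
  {B : FA 𝔽 I →ₗ[𝔽] FA 𝔽 I →ₗ[𝔽] 𝔽}

theorem θ_one_eq_zero (hB : IsLusztigForm α r B) (hr : IsTwistedCoproduct cd v β r) (j : I) :
    B (θ 𝔽 j) 1 = 0 := by
  -- `(θ_j, 1) = (θ_j, 1 · 1)` expands to `2 (θ_j, 1)`.
  have h := hB.mul_right (θ 𝔽 j) 1 1
  rw [mul_one, hr.map_θ, θ_eq_single, MonoidAlgebra.one_def, tmul_single_one, tmul_single_one,
    tmul_single_one, pairT_add_left, pairT_single_one, pairT_single_one] at h
  simp only [wt_of, wt_one, MultForm.f_zero_left, MultForm.f_zero_right, ← MonoidAlgebra.one_def,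
    ← θ_eq_single, hB.one_one] at h
  linear_combination -h

theorem single_one_eq_zero (hB : IsLusztigForm α r B) (hr : IsTwistedCoproduct cd v β r)
    {w : FreeMonoid I} (hw : w ≠ 1) : B (single w 1) 1 = 0 := by
  cases w using FreeMonoid.casesOn with
  | one => exact absurd rfl hw
  | of_mul j w =>
    rw [← θ_mul_single, hB.mul_left, hr.map_one_eq_single, θ_eq_single, tmul_single_one,
      pairT_single_one, ← θ_eq_single, ← MonoidAlgebra.one_def, hB.θ_one_eq_zero hr, mul_zero,
      zero_mul]

theorem single_θ_eq_zero (hB : IsLusztigForm α r B) (hr : IsTwistedCoproduct cd v β r)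
    {w : FreeMonoid I} {j : I} (hw : wt w ≠ δN j) : B (single w 1) (θ 𝔽 j) = 0 := by
  cases w using FreeMonoid.casesOn with
  | one => rw [← MonoidAlgebra.one_def, hB.symm, hB.θ_one_eq_zero hr]
  | of_mul k w =>
    rw [← θ_mul_single, hB.mul_left, hr.map_θ, θ_eq_single, θ_eq_single,
      MonoidAlgebra.one_def, tmul_single_one, tmul_single_one, tmul_single_one, pairT_add_right,
      pairT_single_one, pairT_single_one, ← θ_eq_single, ← θ_eq_single, ← MonoidAlgebra.one_def,
      hB.θ_one_eq_zero hr]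
    by_cases hw1 : w = 1
    · subst hw1
      have hkj : k ≠ j := by rintro rfl; simp at hw
      rw [hB.θ_θ_of_ne k j hkj]
      ring
    · rw [hB.single_one_eq_zero hr hw1]
      ring

theorem single_single_eq_zero (hB : IsLusztigForm α r B) (hr : IsTwistedCoproduct cd v β r)
    {w u : FreeMonoid I} (hwu : wt w ≠ wt u) : B (single w 1) (single u 1) = 0 := by
  induction u using FreeMonoid.recOn generalizing w with
  | one =>
    rw [← MonoidAlgebra.one_def]
    exact hB.single_one_eq_zero hr fun hw => hwu (by rw [hw])
  | of_mul j u ih =>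
    rw [← θ_mul_single, hB.mul_right, θ_eq_single, tmul_single_one, pairT_single_one_right]
    refine Finset.sum_eq_zero fun p hp => ?_
    dsimp only
    by_cases hp1 : wt p.1 = δN j
    · have hp2 : wt p.2 ≠ wt u := fun h => hwu <| by
        rw [← hr.isHomogT_map_single_one w p hp, hp1, h, wt_mul, wt_of]
      rw [ih hp2, mul_zero]
    · rw [← θ_eq_single, hB.single_θ_eq_zero hr hp1, mul_zero, zero_mul]

theorem apply_mul_θ (hB : IsLusztigForm α r B) (hr : IsTwistedCoproduct cd v β r)
    (x : FA 𝔽 I) (u : FreeMonoid I) (i : I) :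
    B x (single u 1 * θ 𝔽 i) = α.f (wt u) (δN i) * B (θ 𝔽 i) (θ 𝔽 i) *
      B (sliceSnd (FreeMonoid.of i) (r x)) (single u 1) := by
  suffices B.flip (single u 1 * θ 𝔽 i) = (α.f (wt u) (δN i) * B (θ 𝔽 i) (θ 𝔽 i)) •
      (B.flip (single u 1) ∘ₗ sliceSnd (FreeMonoid.of i) ∘ₗ r) from
    LinearMap.congr_fun this x
  ext w : 2
  simp only [LinearMap.comp_apply, MonoidAlgebra.lsingle_apply, LinearMap.flip_apply,
    LinearMap.smul_apply, smul_eq_mul]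
  rw [hB.mul_right, θ_eq_single, tmul_single_one, pairT_single_one_right, apply_sliceSnd,
    Finsupp.mul_sum, ← θ_eq_single]
  refine Finsupp.sum_congr fun p _ => ?_
  dsimp only
  split_ifs with hp2
  · rw [hp2, wt_of, ← θ_eq_single]
    by_cases hp1 : wt p.1 = wt u
    · rw [hp1]
      ring
    · rw [hB.single_single_eq_zero hr hp1]
      ring
  · rw [hB.single_θ_eq_zero hr fun h => hp2 (eq_of_wt_eq_δN h)]
    ring

theorem apply_θ_mul (hB : IsLusztigForm α r B) (hr : IsTwistedCoproduct cd v β r)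
    (x : FA 𝔽 I) (u : FreeMonoid I) (i : I) :
    B x (θ 𝔽 i * single u 1) = α.f (δN i) (wt u) * B (θ 𝔽 i) (θ 𝔽 i) *
      B (sliceFst (FreeMonoid.of i) (r x)) (single u 1) := by
  suffices B.flip (θ 𝔽 i * single u 1) = (α.f (δN i) (wt u) * B (θ 𝔽 i) (θ 𝔽 i)) •
      (B.flip (single u 1) ∘ₗ sliceFst (FreeMonoid.of i) ∘ₗ r) from
    LinearMap.congr_fun this x
  ext w : 2
  simp only [LinearMap.comp_apply, MonoidAlgebra.lsingle_apply, LinearMap.flip_apply,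
    LinearMap.smul_apply, smul_eq_mul]
  rw [hB.mul_right, θ_eq_single, tmul_single_one, pairT_single_one_right, apply_sliceFst,
    Finsupp.mul_sum, ← θ_eq_single]
  refine Finsupp.sum_congr fun p _ => ?_
  dsimp only
  split_ifs with hp1
  · rw [hp1, wt_of, ← θ_eq_single]
    by_cases hp2 : wt p.2 = wt u
    · rw [hp2]
      ring
    · rw [hB.single_single_eq_zero hr hp2]
      ring
  · rw [hB.single_θ_eq_zero hr fun h => hp1 (eq_of_wt_eq_δN h)]
    ring

theorem sliceSnd_map_mem_ker (hB : IsLusztigForm α r B) (hr : IsTwistedCoproduct cd v β r)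
    {i : I} (hi : B (θ 𝔽 i) (θ 𝔽 i) ≠ 0) {x : FA 𝔽 I} (hx : x ∈ LinearMap.ker B) :
    sliceSnd (FreeMonoid.of i) (r x) ∈ LinearMap.ker B := by
  ext u : 2
  have h := hB.apply_mul_θ hr x u i
  rw [LinearMap.mem_ker.mp hx, LinearMap.zero_apply, eq_comm] at h
  simpa [α.ne_zero, hi] using h

theorem sliceFst_map_mem_ker (hB : IsLusztigForm α r B) (hr : IsTwistedCoproduct cd v β r)
    {i : I} (hi : B (θ 𝔽 i) (θ 𝔽 i) ≠ 0) {x : FA 𝔽 I} (hx : x ∈ LinearMap.ker B) :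
    sliceFst (FreeMonoid.of i) (r x) ∈ LinearMap.ker B := by
  ext u : 2
  have h := hB.apply_θ_mul hr x u i
  rw [LinearMap.mem_ker.mp hx, LinearMap.zero_apply, eq_comm] at h
  simpa [α.ne_zero, hi] using h

end IsLusztigForm

end Form

theorem ri_ir_preserve_radical_general
    {I : Type} [DecidableEq I] (cd : CartanDatum I)
    {𝔽 : Type} [Field 𝔽] [CharZero 𝔽] (v : 𝔽) (hv : Transcendental ℚ v)
    (α β : MultForm I 𝔽)
    (r : FA 𝔽 I →ₗ[𝔽] TA 𝔽 I)
    (hr1 : r 1 = tmul 1 1)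
    (hrθ : ∀ i : I, r (θ 𝔽 i) = tmul (θ 𝔽 i) 1 + tmul 1 (θ 𝔽 i))
    (hrm : ∀ x y : FA 𝔽 I, r (x * y) = tMul cd v β (r x) (r y))
    (B : FA 𝔽 I →ₗ[𝔽] FA 𝔽 I →ₗ[𝔽] 𝔽)
    (hBsymm : ∀ x y, B x y = B y x)
    (hB1 : B 1 1 = 1)
    (hBθ : ∀ i j : I, B (θ 𝔽 i) (θ 𝔽 j) = if i = j then (1 - v ^ (-(cd.c i i)))⁻¹ else 0)
    (hBr : ∀ x y' y'', B x (y' * y'') = pairT α B (r x) (tmul y' y''))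
    (hBl : ∀ x' x'' y, B (x' * x'') y = pairT α B (tmul x' x'') (r y))
    (ri : I → (FA 𝔽 I →ₗ[𝔽] FA 𝔽 I))
    (hri1 : ∀ i, ri i 1 = 0)
    (hriθ : ∀ i j : I, ri i (θ 𝔽 j) = if i = j then 1 else 0)
    (hrim : ∀ (i : I) (ν μ : I →₀ ℕ) (x y : FA 𝔽 I), IsHomog ν x → IsHomog μ y →
      ri i (x * y) = (v ^ (-(cd.dotN (δN i) μ)) * β.f (δN i) μ) • (ri i x * y) + x * ri i y)
    (ir : I → (FA 𝔽 I →ₗ[𝔽] FA 𝔽 I))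
    (hir1 : ∀ i, ir i 1 = 0)
    (hirθ : ∀ i j : I, ir i (θ 𝔽 j) = if i = j then 1 else 0)
    (hirm : ∀ (i : I) (ν μ : I →₀ ℕ) (x y : FA 𝔽 I), IsHomog ν x → IsHomog μ y →
      ir i (x * y) = ir i x * y + (v ^ (-(cd.dotN (δN i) ν)) * β.f ν (δN i)) • (x * ir i y))
    :
    ∀ (i : I) (x : FA 𝔽 I), (∀ z, B x z = 0) →
      (∀ z, B (ri i x) z = 0) ∧ (∀ z, B (ir i x) z = 0) := by
  intro i x hx
  have hr : IsTwistedCoproduct cd v β r := ⟨hr1, hrθ, hrm⟩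
  have hB : IsLusztigForm α r B :=
    ⟨hBsymm, hB1, fun i j hij => by rw [hBθ, if_neg hij], hBr, hBl⟩
  have hi : B (θ 𝔽 i) (θ 𝔽 i) ≠ 0 := by
    rw [hBθ, if_pos rfl]
    exact inv_ne_zero (hv.one_sub_zpow_neg_ne_zero (cd.pos i))
  have hxB : x ∈ LinearMap.ker B := LinearMap.ext hx
  have hri := hB.sliceSnd_map_mem_ker hr hi hxB
  have hir := hB.sliceFst_map_mem_ker hr hi hxB
  rw [← LinearMap.comp_apply, hr.sliceSnd_of_comp_eq (hri1 i) (hriθ i) (hrim i)] at hri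
  rw [← LinearMap.comp_apply, hr.sliceFst_of_comp_eq (hir1 i) (hirθ i) (hirm i)] at hir
  exact ⟨LinearMap.congr_fun hri, LinearMap.congr_fun hir⟩

theorem ri_ir_preserve_radical
    {I : Type} [Fintype I] [DecidableEq I] (cd : CartanDatum I)
    {𝔽 : Type} [Field 𝔽] [CharZero 𝔽] (v : 𝔽) (hv : Transcendental ℚ v)
    (α β : MultForm I 𝔽)
    (hαβ : ∀ i j : I, β.f (δN i) (δN j) * α.f (δN j) (δN i)
      = β.f (δN j) (δN i) * α.f (δN i) (δN j))
    (hββ : ∀ i j : I, β.f (δN i) (δN j) * β.f (δN j) (δN i) = 1)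
    (hβii : ∀ i : I, β.f (δN i) (δN i) = 1)
    (r : FA 𝔽 I →ₗ[𝔽] TA 𝔽 I)
    (hr1 : r 1 = tmul 1 1)
    (hrθ : ∀ i : I, r (θ 𝔽 i) = tmul (θ 𝔽 i) 1 + tmul 1 (θ 𝔽 i))
    (hrm : ∀ x y : FA 𝔽 I, r (x * y) = tMul cd v β (r x) (r y))
    (B : FA 𝔽 I →ₗ[𝔽] FA 𝔽 I →ₗ[𝔽] 𝔽)
    (hBsymm : ∀ x y, B x y = B y x)
    (hB1 : B 1 1 = 1)
    (hBθ : ∀ i j : I, B (θ 𝔽 i) (θ 𝔽 j) = if i = j then (1 - v ^ (-(cd.c i i)))⁻¹ else 0)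
    (hBr : ∀ x y' y'', B x (y' * y'') = pairT α B (r x) (tmul y' y''))
    (hBl : ∀ x' x'' y, B (x' * x'') y = pairT α B (tmul x' x'') (r y))
    (ri : I → (FA 𝔽 I →ₗ[𝔽] FA 𝔽 I))
    (hri1 : ∀ i, ri i 1 = 0)
    (hriθ : ∀ i j : I, ri i (θ 𝔽 j) = if i = j then 1 else 0)
    (hrim : ∀ (i : I) (ν μ : I →₀ ℕ) (x y : FA 𝔽 I), IsHomog ν x → IsHomog μ y →
      ri i (x * y) = (v ^ (-(cd.dotN (δN i) μ)) * β.f (δN i) μ) • (ri i x * y) + x * ri i y)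
    (ir : I → (FA 𝔽 I →ₗ[𝔽] FA 𝔽 I))
    (hir1 : ∀ i, ir i 1 = 0)
    (hirθ : ∀ i j : I, ir i (θ 𝔽 j) = if i = j then 1 else 0)
    (hirm : ∀ (i : I) (ν μ : I →₀ ℕ) (x y : FA 𝔽 I), IsHomog ν x → IsHomog μ y →
      ir i (x * y) = ir i x * y + (v ^ (-(cd.dotN (δN i) ν)) * β.f ν (δN i)) • (x * ir i y))
    :
    ∀ (i : I) (x : FA 𝔽 I), (∀ z, B x z = 0) →
      (∀ z, B (ri i x) z = 0) ∧ (∀ z, B (ir i x) z = 0) :=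
  ri_ir_preserve_radical_general cd v hv α β r hr1 hrθ hrm B hBsymm hB1 hBθ hBr hBl ri hri1 hriθ
    hrim ir hir1 hirθ hirm
end

section
/- For every x∈'𝔣⁺ and all y',y''∈ ̂'𝔣⁻, one has ρ⁺(x)(y'y'') = Σ ρ⁺(x₁)(y')·ρ⁺(x₂)(y''), where Δ₊(x)=Σ x₁⊗x₂. -/
open scoped TensorProduct

noncomputable section

variable {I : Type}

/-- The generator `i` of `ℤ[I]`. -/
def δZ (i : I) : I →₀ ℤ := Finsupp.single i 1

/-- The inclusion `ℕ[I] → ℤ[I]`. -/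
def nz (ν : I →₀ ℕ) : I →₀ ℤ := Finsupp.mapRange (fun n : ℕ => (n : ℤ)) rfl ν

/-- The multiplicative extension to `ℤ[I] × ℤ[I]` of generator values `g : I → I → 𝔽`. -/
def extZ {𝔽 : Type} [Field 𝔽] (g : I → I → 𝔽) (ν μ : I →₀ ℤ) : 𝔽 :=
  ν.prod fun i m => μ.prod fun j n => g i j ^ (m * n)

/-- The form `⟨i,j⟩ = v^{-i·j} β(i,j) ξ(j,i)`, extended multiplicatively to `ℤ[I]`. -/
def ang {𝔽 : Type} [Field 𝔽] (cd : CartanDatum I) (v : 𝔽) (βg ξg : I → I → 𝔽) :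
    (I →₀ ℤ) → (I →₀ ℤ) → 𝔽 :=
  extZ fun i j => v ^ (-(cd.c i j)) * βg i j * ξg j i

/-- The monomial in `F : I → A` associated with a word `w`. -/
def wordProd {A : Type} [Monoid A] (F : I → A) (w : FreeMonoid I) : A :=
  ((FreeMonoid.toList w).map F).prod

/-- `x` is homogeneous of degree `μ` in the subalgebra generated by the image of `F`. -/
def HomogIn (𝔽 : Type) [Field 𝔽] [DecidableEq I] {A : Type} [Ring A] [Algebra 𝔽 A]
    (F : I → A) (μ : I →₀ ℕ) (x : A) : Prop :=
  x ∈ Submodule.span 𝔽 {z | ∃ w, wt w = μ ∧ z = wordProd F w}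

end

/-!
The elements `x` for which `ρ⁺(x)(y'y'') = Σ ρ⁺(x₁)(y') ρ⁺(x₂)(y'')` form a subalgebra: `Δ₊` is
multiplicative and `ρ⁺` reverses products, so for `x = pq` the operator `ρ⁺(q)` can be pushed through
the expansion for `p` factor by factor. The generator `E_j` lies in it because `ρ⁺(E_j)` is a multiple
of `ⱼ𝒮`, a derivation twisted by `𝒥_j = ρ⁺(J_j)` and `𝒦_j = ρ⁺(K_j)`, which matches
`Δ₊(E_j) = E_j ⊗ J_j + K_j ⊗ E_j`.
-/

open TensorProduct

section SweedlerAction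

variable {R A M : Type*} [CommRing R] [Ring A] [Algebra R A] [Ring M] [Algebra R M]

/-- The right-hand side `Σ ρ t₁ y' * ρ t₂ y''` of the Sweedler formula, as a function of `t = Δ x`. -/
def sweedlerAction (ρ : A →ₗ[R] Module.End R M) (y' y'' : M) : A ⊗[R] A →ₗ[R] M :=
  lift ((LinearMap.mul R M).compl₁₂ (LinearMap.applyₗ y' ∘ₗ ρ) (LinearMap.applyₗ y'' ∘ₗ ρ))

@[simp]
theorem sweedlerAction_tmul (ρ : A →ₗ[R] Module.End R M) (y' y'' : M) (a b : A) :
    sweedlerAction ρ y' y'' (a ⊗ₜ b) = ρ a y' * ρ b y'' :=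
  rfl

variable {ρ : A →ₗ[R] Module.End R M} (hρ : ∀ x y : A, ρ (x * y) = ρ y * ρ x)
include hρ

theorem sweedlerAction_tmul_mul (a b : A) (y' y'' : M) (t : A ⊗[R] A) :
    sweedlerAction ρ y' y'' (a ⊗ₜ b * t) = sweedlerAction ρ (ρ a y') (ρ b y'') t := by
  induction t using TensorProduct.induction_on with
  | zero => simp
  | tmul c d =>
    rw [Algebra.TensorProduct.tmul_mul_tmul, sweedlerAction_tmul, sweedlerAction_tmul, hρ, hρ]
    rfl
  | add s t hs ht => rw [mul_add, map_add, map_add, hs, ht]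

variable (ρ) (hρ1 : ρ 1 = 1) (Δ : A →ₐ[R] A ⊗[R] A)
include hρ1

def sweedlerSubalgebra : Subalgebra R A where
  carrier := {x | ∀ y' y'' : M, ρ x (y' * y'') = sweedlerAction ρ y' y'' (Δ x)}
  algebraMap_mem' r y' y'' := by
    simp [Algebra.algebraMap_eq_smul_one, hρ1, Algebra.TensorProduct.one_def]
  add_mem' {p q} hp hq y' y'' := by
    simp only [map_add, LinearMap.add_apply, hp y' y'', hq y' y'']
  mul_mem' {p q} hp hq y' y'' := by
    have hq_comm : ∀ t : A ⊗[R] A,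
        ρ q (sweedlerAction ρ y' y'' t) = sweedlerAction ρ y' y'' (t * Δ q) := by
      intro t
      induction t using TensorProduct.induction_on with
      | zero => simp
      | tmul a b => rw [sweedlerAction_tmul, hq, sweedlerAction_tmul_mul hρ]
      | add s t hs ht => rw [add_mul, map_add, map_add, map_add, hs, ht]
    rw [hρ, Module.End.mul_apply, hp, hq_comm, map_mul Δ p q]

theorem mem_sweedlerSubalgebra_iff {x : A} :
    x ∈ sweedlerSubalgebra ρ hρ hρ1 Δ ↔
      ∀ y' y'' : M, ρ x (y' * y'') = sweedlerAction ρ y' y'' (Δ x) :=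
  Iff.rfl

theorem mem_sweedlerSubalgebra_of_twisted_derivation {e k j : A}
    (hΔ : Δ e = e ⊗ₜ j + k ⊗ₜ e)
    (hder : ∀ y' y'' : M, ρ e (y' * y'') = ρ e y' * ρ j y'' + ρ k y' * ρ e y'') :
    e ∈ sweedlerSubalgebra ρ hρ hρ1 Δ := by
  intro y' y''
  rw [hΔ, map_add, sweedlerAction_tmul, sweedlerAction_tmul, hder]

end SweedlerAction

theorem rho_plus_sweedler_general
    {I : Type} (cd : CartanDatum I)
    {𝔽 : Type} [Field 𝔽] (v : 𝔽)
    {Ap : Type} [Ring Ap] [Algebra 𝔽 Ap]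
    (E : I → Ap) (K Jp : (I →₀ ℤ) → Ap)
    {Am : Type} [Ring Am] [Algebra 𝔽 Am]
    (cK cJ : (I →₀ ℤ) → (Am →ₗ[𝔽] Am))
    (iS : I → (Am →ₗ[𝔽] Am))
    (hiSmul : ∀ (j : I) (x y : Am), iS j (x * y) = iS j x * cJ (δZ j) y + cK (δZ j) x * iS j y)
    (ρ : Ap →ₗ[𝔽] Module.End 𝔽 Am)
    (hρanti : ∀ x y : Ap, ρ (x * y) = ρ y * ρ x) (hρ1 : ρ 1 = 1)
    (hρE : ∀ j : I, ρ (E j) = (v ^ (-(cd.d j)) - v ^ (cd.d j))⁻¹ • iS j)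
    (hρK : ∀ i : I, ρ (K (δZ i)) = cK (δZ i))
    (hρJ : ∀ i : I, ρ (Jp (δZ i)) = cJ (δZ i))
    (Δp : Ap →ₐ[𝔽] (Ap ⊗[𝔽] Ap))
    (hΔpE : ∀ i, Δp (E i) = E i ⊗ₜ[𝔽] Jp (δZ i) + K (δZ i) ⊗ₜ[𝔽] E i)
    :
    ∀ x ∈ Algebra.adjoin 𝔽 (Set.range E), ∀ (y' y'' : Am) (n : ℕ) (a b : Fin n → Ap),
      Δp x = ∑ k, a k ⊗ₜ[𝔽] b k →
      ρ x (y' * y'') = ∑ k, ρ (a k) y' * ρ (b k) y'' := by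
  have hE : Set.range E ⊆ sweedlerSubalgebra ρ hρanti hρ1 Δp := by
    rintro _ ⟨i, rfl⟩
    refine mem_sweedlerSubalgebra_of_twisted_derivation ρ hρanti hρ1 Δp (hΔpE i) fun y' y'' => ?_
    rw [hρE, hρK, hρJ, LinearMap.smul_apply, hiSmul]
    simp only [LinearMap.smul_apply, smul_add, smul_mul_assoc, mul_smul_comm]
  intro x hx y' y'' n a b hΔ
  rw [(mem_sweedlerSubalgebra_iff ρ hρanti hρ1 Δp).1 (Algebra.adjoin_le hE hx), hΔ, map_sum]
  simp only [sweedlerAction_tmul]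

theorem rho_plus_sweedler
    {I : Type} [Fintype I] [DecidableEq I] (cd : CartanDatum I)
    {𝔽 : Type} [Field 𝔽] [CharZero 𝔽] (v : 𝔽) (hv : Transcendental ℚ v)
    (βg ξg : I → I → 𝔽)
    (hββ : ∀ i j, βg i j * βg j i = 1) (hβii : ∀ i, βg i i = 1)
    (hξsymm : ∀ i j, ξg i j = ξg j i) (hξne : ∀ i j, ξg i j ≠ 0)
    {Ap : Type} [Ring Ap] [Algebra 𝔽 Ap]
    (E : I → Ap) (K Jp : (I →₀ ℤ) → Ap)
    (hK0 : K 0 = 1) (hKadd : ∀ a b, K (a + b) = K a * K b)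
    (hJ0 : Jp 0 = 1) (hJadd : ∀ a b, Jp (a + b) = Jp a * Jp b)
    (hKJ : ∀ a b, K a * Jp b = Jp b * K a)
    (hKE : ∀ i j : I, K (δZ i) * E j = ang cd v βg ξg (δZ i) (δZ j) • (E j * K (δZ i)))
    (hJE : ∀ i j : I, Jp (δZ i) * E j = ξg j i • (E j * Jp (δZ i)))
    (bp : Module.Basis ((I →₀ ℤ) × FreeMonoid I × (I →₀ ℤ)) 𝔽 Ap)
    (hbp : ∀ p, bp p = K p.1 * wordProd E p.2.1 * Jp p.2.2)
    {Am : Type} [Ring Am] [Algebra 𝔽 Am]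
    (F : I → Am) (K' J' : (I →₀ ℤ) → Am)
    (hK'0 : K' 0 = 1) (hK'add : ∀ a b, K' (a + b) = K' a * K' b)
    (hJ'0 : J' 0 = 1) (hJ'add : ∀ a b, J' (a + b) = J' a * J' b)
    (hK'J' : ∀ a b, K' a * J' b = J' b * K' a)
    (hK'F : ∀ i j : I, K' (δZ i) * F j
      = (ang cd v βg ξg (δZ j) (δZ i) * (ξg i j)⁻¹) • (F j * K' (δZ i)))
    (hJ'F : ∀ i j : I, J' (δZ i) * F j = F j * J' (δZ i))
    (bm : Module.Basis ((I →₀ ℤ) × FreeMonoid I × (I →₀ ℤ)) 𝔽 Am)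
    (hbm : ∀ p, bm p = K' p.1 * wordProd F p.2.1 * J' p.2.2)
    (cK cJ : (I →₀ ℤ) → (Am →ₗ[𝔽] Am))
    (hcK : ∀ (ν τ₁ τ₂ : I →₀ ℤ) (w : FreeMonoid I),
      cK ν (K' τ₁ * wordProd F w * J' τ₂)
        = (ang cd v βg ξg ν τ₁ * ang cd v βg ξg ν (nz (wt w))) • (K' τ₁ * wordProd F w * J' τ₂))
    (hcJ : ∀ (ν τ₁ τ₂ : I →₀ ℤ) (w : FreeMonoid I),
      cJ ν (K' τ₁ * wordProd F w * J' τ₂)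
        = (extZ ξg τ₁ ν * extZ ξg (nz (wt w)) ν) • (K' τ₁ * wordProd F w * J' τ₂))
    (iS : I → (Am →ₗ[𝔽] Am))
    (hiS0 : ∀ (j : I) (τ₁ τ₂ : I →₀ ℤ), iS j (K' τ₁ * J' τ₂) = 0)
    (hiSF : ∀ j i : I, iS j (F i) = if i = j then ξg i j • (1 : Am) else 0)
    (hiSmul : ∀ (j : I) (x y : Am), iS j (x * y) = iS j x * cJ (δZ j) y + cK (δZ j) x * iS j y)
    (ρ : Ap →ₗ[𝔽] Module.End 𝔽 Am)
    (hρanti : ∀ x y : Ap, ρ (x * y) = ρ y * ρ x) (hρ1 : ρ 1 = 1)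
    (hρE : ∀ j : I, ρ (E j) = (v ^ (-(cd.d j)) - v ^ (cd.d j))⁻¹ • iS j)
    (hρK : ∀ i : I, ρ (K (δZ i)) = cK (δZ i))
    (hρKinv : ∀ i : I, ρ (K (-(δZ i))) = cK (-(δZ i)))
    (hρJ : ∀ i : I, ρ (Jp (δZ i)) = cJ (δZ i))
    (hρJinv : ∀ i : I, ρ (Jp (-(δZ i))) = cJ (-(δZ i)))
    (Δp : Ap →ₐ[𝔽] (Ap ⊗[𝔽] Ap))
    (hΔpE : ∀ i, Δp (E i) = E i ⊗ₜ[𝔽] Jp (δZ i) + K (δZ i) ⊗ₜ[𝔽] E i)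
    (hΔpK : ∀ ν, Δp (K ν) = K ν ⊗ₜ[𝔽] K ν) (hΔpJ : ∀ ν, Δp (Jp ν) = Jp ν ⊗ₜ[𝔽] Jp ν)
    :
    ∀ x ∈ Algebra.adjoin 𝔽 (Set.range E), ∀ (y' y'' : Am) (n : ℕ) (a b : Fin n → Ap),
      Δp x = ∑ k, a k ⊗ₜ[𝔽] b k →
      ρ x (y' * y'') = ∑ k, ρ (a k) y' * ρ (b k) y'' :=
  rho_plus_sweedler_general cd v E K Jp cK cJ iS hiSmul ρ hρanti hρ1 hρE hρK hρJ Δp hΔpE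
end
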